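/- arXiv:0706.1226 — 2 statements merged into one kernel-verified Lean document; each statement's English description precedes it below -/
import Mathlib

section
/- Suppose c satisfies (A0), (A1), (A2), and let x_m ∈ Ω and y₀, y₁ ∈ Λ be joined by a c-segment [y₀,y₁]_{x_m} lying in Λ. If Monotonicity holds (S⁺_{θ₁} ⊆ S⁺_{θ₂} whenever 0 ≤ θ₁ ≤ θ₂ ≤ 1), then DASM holds: f_θ(x) ≤ max(f₀(x), f₁(x)) for all θ ∈ (0,1) and all x ∈ Ω. -/
open scoped RealInnerProductSpace
open Filter Topology Set

noncomputable section

variable {n : ℕ}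

local notation "E" => EuclideanSpace ℝ (Fin n)

/-- `-∇ₓ c(x,y)`, the negative gradient of `x' ↦ c(x',y)` at `x`. -/
def negGradX (c : E → E → ℝ) (x y : E) : E :=
  -(gradient (fun x' => c x' y) x)

/-- `-∇_y c(x,y)`, the negative gradient of `y' ↦ c(x,y')` at `y`. -/
def negGradY (c : E → E → ℝ) (x y : E) : E :=
  -(gradient (fun y' => c x y') y)

/-- The swapped cost `c*(y,x) = c(x,y)`. -/
def cStar (c : E → E → ℝ) : E → E → ℝ := fun y x => c x y

/-- The domain of the `c`-exponential map at `x`: `{-∇ₓ c(x,y) : y ∈ Λ}`. -/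
def cExpDom (c : E → E → ℝ) (Λ : Set E) (x : E) : Set E :=
  (fun y => negGradX c x y) '' Λ

/-- The `c`-exponential map: `cExp c Λ x p` is the point `y ∈ Λ` with `p = -∇ₓ c(x,y)`
(when it exists and is unique). -/
def cExp (c : E → E → ℝ) (Λ : Set E) (x p : E) : E :=
  Function.invFunOn (fun y => negGradX c x y) Λ p

/-- Condition (A0): the cost extends to a `C⁴` function on `cl Ω × cl Λ`. -/
def A0 (c : E → E → ℝ) (Ω Λ : Set E) : Prop :=
  ContDiffOn ℝ 4 (fun q : E × E => c q.1 q.2) (closure Ω ×ˢ closure Λ)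

/-- Condition (A1): injectivity of `y ↦ -∇ₓ c(x,y)` on `cl Λ` and of
`x ↦ -∇_y c(x,y)` on `cl Ω`. -/
def A1 (c : E → E → ℝ) (Ω Λ : Set E) : Prop :=
  (∀ x ∈ Ω, Set.InjOn (fun y => negGradX c x y) (closure Λ)) ∧
  (∀ y ∈ Λ, Set.InjOn (fun x => negGradY c x y) (closure Ω))

/-- Condition (A2): the mixed second derivative `D²ₓᵧ c(x,y)`, as a linear map, is
invertible for all `(x,y) ∈ cl Ω × cl Λ`. -/
def A2 (c : E → E → ℝ) (Ω Λ : Set E) : Prop :=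
  ∀ x ∈ closure Ω, ∀ y ∈ closure Λ,
    Function.Bijective (fderiv ℝ (fun y' => negGradX c x y') y)

/-- The `c`-sectional curvature
`𝔖_c(x,y)(η,ξ) = (d²/dt²)|₀ [-D²ₓₓ c](x, cExpₓ(p + tξ))(η,η)` with `p = -∇ₓ c(x,y)`. -/
def cSectional (c : E → E → ℝ) (Λ : Set E) (x y η ξ : E) : ℝ :=
  deriv (deriv (fun t : ℝ =>
    -(iteratedFDeriv ℝ 2
        (fun x' => c x' (cExp c Λ x (negGradX c x y + t • ξ))) x ![η, η]))) 0

/-- Condition (A3W): nonnegative `c`-sectional curvature in orthogonal directions. -/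
def A3W (c : E → E → ℝ) (Ω Λ : Set E) : Prop :=
  ∀ x ∈ Ω, ∀ y ∈ Λ, ∀ η ξ : E, ⟪η, ξ⟫ = 0 → 0 ≤ cSectional c Λ x y η ξ

/-- Condition (A3S): uniformly positive `c`-sectional curvature in orthogonal directions. -/
def A3S (c : E → E → ℝ) (Ω Λ : Set E) : Prop :=
  ∃ C₀ > (0:ℝ), ∀ x ∈ Ω, ∀ y ∈ Λ, ∀ η ξ : E, ⟪η, ξ⟫ = 0 →
    C₀ * ‖η‖ ^ 2 * ‖ξ‖ ^ 2 ≤ cSectional c Λ x y η ξ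

/-- `Λ` is `c`-convex with respect to `Ω`: `(cExpₓ)⁻¹(Λ)` is convex for every `x ∈ Ω`. -/
def CConvexTarget (c : E → E → ℝ) (Ω Λ : Set E) : Prop :=
  ∀ x ∈ Ω, Convex ℝ (cExpDom c Λ x)

/-- `Ω` is `c*`-convex with respect to `Λ`: `(c*Exp_y)⁻¹(Ω)` is convex for every `y ∈ Λ`. -/
def CStarConvexSource (c : E → E → ℝ) (Ω Λ : Set E) : Prop :=
  ∀ y ∈ Λ, Convex ℝ ((fun x => negGradY c x y) '' Ω)

/-- The `c`-Legendre transform `L^c v(x) = sup_{y ∈ Λ} (-c(x,y) - v(y))`. -/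
def cTransform (c : E → E → ℝ) (Λ : Set E) (v : E → EReal) (x : E) : EReal :=
  ⨆ y ∈ Λ, (((-(c x y) : ℝ) : EReal) - v y)

/-- `φ` is a `c`-convex function on `Ω` indexed by `Λ`. -/
def IsCConvexOn (c : E → E → ℝ) (Ω Λ : Set E) (φ : E → ℝ) : Prop :=
  ∃ v : E → EReal,
    (∀ x ∈ Ω, (φ x : EReal) = cTransform c Λ v x) ∧
    (∀ x ∈ Ω, ∃ y ∈ closure Λ, (φ x : EReal) + v y = ((-(c x y) : ℝ) : EReal))

/-- The `c*`-Legendre transform `L^{c*} φ(y) = sup_{x ∈ Ω} (-c(x,y) - φ(x))`. -/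
def cStarTransform (c : E → E → ℝ) (Ω : Set E) (φ : E → ℝ) (y : E) : EReal :=
  ⨆ x ∈ Ω, (((-(c x y) - φ x : ℝ)) : EReal)

/-- The contact set `G_φ(x) = {y ∈ cl Λ : φ(x) + L^{c*}φ(y) = -c(x,y)}`. -/
def contactSet (c : E → E → ℝ) (Ω Λ : Set E) (φ : E → ℝ) (x : E) : Set E :=
  {y ∈ closure Λ | (φ x : EReal) + cStarTransform c Ω φ y = ((-(c x y) : ℝ) : EReal)}

/-- The (local) subdifferential `∂φ(x)`:
`φ(z) ≥ φ(x) + ⟨p, z - x⟩ + o(‖z - x‖)` as `z → x` in `Ω`. -/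
def subdiff (Ω : Set E) (φ : E → ℝ) (x : E) : Set E :=
  {p : E | ∀ ε > (0:ℝ), ∀ᶠ z in 𝓝[Ω] x,
      φ x + ⟪p, z - x⟫ - ε * ‖z - x‖ ≤ φ z}

/-- The `c`-subdifferential `∂^c φ(x) = {-∇ₓ c(x,y) : y ∈ G_φ(x)}`. -/
def cSubdiff (c : E → E → ℝ) (Ω Λ : Set E) (φ : E → ℝ) (x : E) : Set E :=
  (fun y => negGradX c x y) '' contactSet c Ω Λ φ x

/-- The straight segment `p_θ = (1-θ) p₀ + θ p₁` with `pᵢ = -∇ₓ c(x_m, yᵢ)`. -/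
def pSeg (c : E → E → ℝ) (xm y₀ y₁ : E) (θ : ℝ) : E :=
  (1 - θ) • negGradX c xm y₀ + θ • negGradX c xm y₁

/-- The `c`-segment `y_θ = cExp_{x_m}(p_θ)` joining `y₀` to `y₁` with respect to `x_m`. -/
def ySeg (c : E → E → ℝ) (Λ : Set E) (xm y₀ y₁ : E) (θ : ℝ) : E :=
  cExp c Λ xm (pSeg c xm y₀ y₁ θ)

/-- The sliding mountain `f_θ(x) = -c(x, y_θ) + c(x_m, y_θ)`. -/
def slide (c : E → E → ℝ) (Λ : Set E) (xm y₀ y₁ : E) (θ : ℝ) (x : E) : ℝ :=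
  -(c x (ySeg c Λ xm y₀ y₁ θ)) + c xm (ySeg c Λ xm y₀ y₁ θ)

/-- The `c`-segment `[y₀,y₁]_{x_m}` lies in `Λ`:
each `p_θ`, `θ ∈ [0,1]`, is in the domain of `cExp_{x_m}`. -/
def segInTarget (c : E → E → ℝ) (Λ : Set E) (xm y₀ y₁ : E) : Prop :=
  ∀ θ ∈ Set.Icc (0:ℝ) 1, pSeg c xm y₀ y₁ θ ∈ cExpDom c Λ xm

/-- The level set `S_θ = {x ∈ Ω : (d/dθ) f_θ(x) = 0}`. -/
def Slevel (c : E → E → ℝ) (Ω Λ : Set E) (xm y₀ y₁ : E) (θ : ℝ) : Set E :=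
  {x ∈ Ω | deriv (fun θ' => slide c Λ xm y₀ y₁ θ' x) θ = 0}

/-- The super-level set `S⁺_θ = {x ∈ Ω : (d/dθ) f_θ(x) ≥ 0}`. -/
def Splus (c : E → E → ℝ) (Ω Λ : Set E) (xm y₀ y₁ : E) (θ : ℝ) : Set E :=
  {x ∈ Ω | 0 ≤ deriv (fun θ' => slide c Λ xm y₀ y₁ θ' x) θ}


/-! The sliding mountain `θ ↦ f_θ(x)` is differentiable on `[0,1]`, because `c`-Exp is the
inverse of `y ↦ -∇ₓc(x_m,y)`, which is `C³` with invertible derivative by (A0), (A2) and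
injective by (A1). Monotonicity of `S⁺_θ` says that once `∂_θ f_θ(x) ≥ 0` it stays so; hence
`θ ↦ f_θ(x)` is either nondecreasing on `[θ,1]` or nonincreasing on `[0,θ]`, and in either case
`f_θ(x)` is bounded by a value at an endpoint. -/

theorem le_max_of_deriv_nonneg_persistent {f : ℝ → ℝ} {a b : ℝ}
    (hf : ContinuousOn f (Icc a b)) (hf' : DifferentiableOn ℝ f (Ioo a b))
    (hsign : ∀ s t, a < s → s ≤ t → t < b → 0 ≤ deriv f s → 0 ≤ deriv f t) :
    ∀ θ ∈ Ioo a b, f θ ≤ max (f a) (f b) := by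
  intro θ hθ
  by_cases hθ' : 0 ≤ deriv f θ
  · have hmono : MonotoneOn f (Icc θ b) :=
      monotoneOn_of_deriv_nonneg (convex_Icc θ b) (hf.mono (Icc_subset_Icc_left hθ.1.le))
        (hf'.mono (by rw [interior_Icc]; exact Ioo_subset_Ioo_left hθ.1.le))
        (fun t ht => by
          rw [interior_Icc] at ht
          exact hsign θ t hθ.1 ht.1.le ht.2 hθ')
    exact le_max_of_le_right
      (hmono (left_mem_Icc.2 hθ.2.le) (right_mem_Icc.2 hθ.2.le) hθ.2.le)
  · have hanti : AntitoneOn f (Icc a θ) :=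
      antitoneOn_of_deriv_nonpos (convex_Icc a θ) (hf.mono (Icc_subset_Icc_right hθ.2.le))
        (hf'.mono (by rw [interior_Icc]; exact Ioo_subset_Ioo_right hθ.2.le))
        (fun t ht => by
          rw [interior_Icc] at ht
          exact le_of_not_ge fun ht' => hθ' (hsign t θ ht.1 ht.2.le hθ.2 ht'))
    exact le_max_of_le_left
      (hanti (left_mem_Icc.2 hθ.1.le) (right_mem_Icc.2 hθ.1.le) hθ.1.le)

theorem contDiffAt_invFunOn {V W : Type*} [NormedAddCommGroup V] [NormedSpace ℝ V]
    [CompleteSpace V] [NormedAddCommGroup W] [NormedSpace ℝ W] [CompleteSpace W]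
    {f : V → W} {f' : V ≃L[ℝ] W} {s : Set V} {y : V} {k : WithTop ℕ∞}
    (hs : IsOpen s) (hinj : InjOn f s) (hy : y ∈ s) (hf : ContDiffAt ℝ k f y)
    (hf' : HasFDerivAt f (f' : V →L[ℝ] W) y) (hk : k ≠ 0) :
    ContDiffAt ℝ k (Function.invFunOn f s) (f y) := by
  have hstrict := hf.hasStrictFDerivAt' hf' hk
  have hmem : ∀ᶠ q in 𝓝 (f y), hstrict.localInverse f f' y q ∈ s :=
    hstrict.localInverse_continuousAt.eventually_mem
      (by rw [hstrict.localInverse_apply_image]; exact hs.mem_nhds hy)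
  refine (hf.to_localInverse hf' hk).congr_of_eventuallyEq ?_
  filter_upwards [hstrict.eventually_right_inverse, hmem] with q hq hqs
  have hex : ∃ a ∈ s, f a = q := ⟨_, hqs, hq⟩
  exact hinj (Function.invFunOn_mem hex) hqs ((Function.invFunOn_eq hex).trans hq.symm)

theorem A0.contDiffAt {c : E → E → ℝ} {Ω Λ : Set E}
    (h0 : A0 c Ω Λ) (hΩ : IsOpen Ω) (hΛ : IsOpen Λ) {x y : E}
    (hx : x ∈ Ω) (hy : y ∈ Λ) : ContDiffAt ℝ 4 (fun q : E × E => c q.1 q.2) (x, y) :=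
  ContDiffOn.contDiffAt h0 (mem_nhds_iff.2 ⟨Ω ×ˢ Λ, prod_mono subset_closure subset_closure,
    hΩ.prod hΛ, hx, hy⟩)

theorem contDiffAt_negGradX {c : E → E → ℝ} {Ω Λ : Set E}
    (h0 : A0 c Ω Λ) (hΩ : IsOpen Ω) (hΛ : IsOpen Λ) {x y : E}
    (hx : x ∈ Ω) (hy : y ∈ Λ) : ContDiffAt ℝ 3 (negGradX c x) y := by
  have hc : ContDiffAt ℝ 4 (fun q : E × E => c q.2 q.1) (y, x) :=
    (h0.contDiffAt hΩ hΛ hx hy).comp (y, x) (contDiffAt_snd.prodMk contDiffAt_fst)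
  have hfderiv : ContDiffAt ℝ 3 (fun y' => fderiv ℝ (fun x' => c x' y') x) y :=
    ContDiffAt.fderiv (f := fun y' x' => c x' y') hc contDiffAt_const (by norm_num)
  exact ((InnerProductSpace.toDual ℝ E).symm.contDiff.contDiffAt.comp y hfderiv).neg

theorem contDiffAt_cExp {c : E → E → ℝ} {Ω Λ : Set E}
    (h0 : A0 c Ω Λ) (h1 : A1 c Ω Λ) (h2 : A2 c Ω Λ) (hΩ : IsOpen Ω)
    (hΛ : IsOpen Λ) {x p : E} (hx : x ∈ Ω) (hp : p ∈ cExpDom c Λ x) :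
    ContDiffAt ℝ 3 (cExp c Λ x) p := by
  obtain ⟨y, hy, rfl⟩ := hp
  have hF := contDiffAt_negGradX h0 hΩ hΛ hx hy
  let e : E ≃L[ℝ] E := (LinearEquiv.ofBijective _
    (h2 x (subset_closure hx) y (subset_closure hy))).toContinuousLinearEquiv
  exact contDiffAt_invFunOn (f' := e) hΛ ((h1.1 x hx).mono subset_closure) hy hF
    (hF.differentiableAt (by norm_num)).hasFDerivAt (by norm_num)

theorem differentiableAt_slide {c : E → E → ℝ} {Ω Λ : Set E}
    (h0 : A0 c Ω Λ) (h1 : A1 c Ω Λ) (h2 : A2 c Ω Λ)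
    (hΩ : IsOpen Ω) (hΛ : IsOpen Λ) {xm y₀ y₁ x : E} (hxm : xm ∈ Ω)
    (hseg : segInTarget c Λ xm y₀ y₁) (hx : x ∈ Ω) {θ : ℝ} (hθ : θ ∈ Icc (0 : ℝ) 1) :
    DifferentiableAt ℝ (fun θ' => slide c Λ xm y₀ y₁ θ' x) θ := by
  have hyΛ : ySeg c Λ xm y₀ y₁ θ ∈ Λ := Function.invFunOn_mem (hseg θ hθ)
  have hy : DifferentiableAt ℝ (ySeg c Λ xm y₀ y₁) θ :=
    ((contDiffAt_cExp h0 h1 h2 hΩ hΛ hxm (hseg θ hθ)).differentiableAt (by norm_num)).comp θ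
      (by unfold pSeg; fun_prop)
  have hc : ∀ z ∈ Ω, DifferentiableAt ℝ (c z) (ySeg c Λ xm y₀ y₁ θ) := fun z hz =>
    ((h0.contDiffAt hΩ hΛ hz hyΛ).comp _
      (contDiffAt_const.prodMk contDiffAt_id)).differentiableAt (by norm_num)
  exact ((hc x hx).comp θ hy).neg.add ((hc xm hxm).comp θ hy)

theorem statement6_general (c : E → E → ℝ) (Ω Λ : Set E) (hΩ : IsOpen Ω) (hΛ : IsOpen Λ)
    (h0 : A0 c Ω Λ) (h1 : A1 c Ω Λ) (h2 : A2 c Ω Λ)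
    (xm : E) (hxm : xm ∈ Ω) (y₀ : E) (y₁ : E)
    (hseg : segInTarget c Λ xm y₀ y₁)
    (hmono : ∀ θ₁ θ₂ : ℝ, 0 ≤ θ₁ → θ₁ ≤ θ₂ → θ₂ ≤ 1 →
      Splus c Ω Λ xm y₀ y₁ θ₁ ⊆ Splus c Ω Λ xm y₀ y₁ θ₂) :
    ∀ θ ∈ Set.Ioo (0:ℝ) 1, ∀ x ∈ Ω,
      slide c Λ xm y₀ y₁ θ x ≤
        max (slide c Λ xm y₀ y₁ 0 x) (slide c Λ xm y₀ y₁ 1 x) := by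
  intro θ hθ x hx
  have hdiff : ∀ t ∈ Icc (0 : ℝ) 1,
      DifferentiableAt ℝ (fun θ' => slide c Λ xm y₀ y₁ θ' x) t :=
    fun t ht => differentiableAt_slide h0 h1 h2 hΩ hΛ hxm hseg hx ht
  exact le_max_of_deriv_nonneg_persistent
    (fun t ht => (hdiff t ht).continuousAt.continuousWithinAt)
    (fun t ht => (hdiff t (Ioo_subset_Icc_self ht)).differentiableWithinAt)
    (fun s t hs hst ht hs' => (hmono s t hs.le hst ht.le ⟨hx, hs'⟩).2) θ hθ

theorem statement6 (c : E → E → ℝ) (Ω Λ : Set E) (hΩ : IsOpen Ω) (hΛ : IsOpen Λ)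
    (h0 : A0 c Ω Λ) (h1 : A1 c Ω Λ) (h2 : A2 c Ω Λ)
    (xm : E) (hxm : xm ∈ Ω) (y₀ : E) (hy₀ : y₀ ∈ Λ) (y₁ : E) (hy₁ : y₁ ∈ Λ)
    (hseg : segInTarget c Λ xm y₀ y₁)
    (hmono : ∀ θ₁ θ₂ : ℝ, 0 ≤ θ₁ → θ₁ ≤ θ₂ → θ₂ ≤ 1 →
      Splus c Ω Λ xm y₀ y₁ θ₁ ⊆ Splus c Ω Λ xm y₀ y₁ θ₂) :
    ∀ θ ∈ Set.Ioo (0:ℝ) 1, ∀ x ∈ Ω,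
      slide c Λ xm y₀ y₁ θ x ≤
        max (slide c Λ xm y₀ y₁ 0 x) (slide c Λ xm y₀ y₁ 1 x) :=
  statement6_general c Ω Λ hΩ hΛ h0 h1 h2 xm hxm y₀ y₁ hseg hmono

end
end

section
/- Let f, g : ℝⁿ → ℝ be C¹ convex functions and suppose there is L < 1 with ‖∇f(x)‖ ≤ L and ‖∇g(y)‖ ≤ L for all x, y ∈ ℝⁿ. Define the cost c(x,y) = ‖x − y‖² + (f(x) − g(y))², so that −∇ₓc(x,y) = 2(y − x) + 2(g(y) − f(x))∇f(x). Then for every fixed x ∈ ℝⁿ, the map y ↦ −∇ₓc(x,y) from ℝⁿ to ℝⁿ is proper: ‖−∇ₓc(x,y)‖ → ∞ as ‖y‖ → ∞ (equivalently, preimages of bounded sets are bounded). -/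
open scoped RealInnerProductSpace

/-!
Since `∇g` is bounded by `L`, `g` is `L`-Lipschitz, so `|f x - g y| ≤ |f x - g x| + L ‖x - y‖`.
Writing `-∇ₓc(x,y) = 2 (y - x) + 2 (g y - f x) ∇f(x)` and using `‖∇f(x)‖ ≤ L`, this gives
`‖∇ₓc(x,y)‖ ≥ 2 ((1 - L²) ‖x - y‖ - L |f x - g x|)`, which grows linearly in `‖y‖` as `L < 1`.
-/

section

variable {E : Type*} [NormedAddCommGroup E] [InnerProductSpace ℝ E] [CompleteSpace E]

theorem HasGradientAt.norm_sub_sq_add_sub_sq {f : E → ℝ} {f' x : E} (hf : HasGradientAt f f' x)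
    (y : E) (b : ℝ) :
    HasGradientAt (fun x' => ‖x' - y‖ ^ 2 + (f x' - b) ^ 2)
      ((2 : ℝ) • (x - y + (f x - b) • f')) x := by
  rw [hasGradientAt_iff_hasFDerivAt] at hf ⊢
  refine (((hasFDerivAt_id x).sub_const y).norm_sq.add ((hf.sub_const b).pow 2)).congr_fderiv ?_
  ext w
  simp
  ring

theorem abs_sub_le_of_norm_gradient_le {g : E → ℝ} (hg : Differentiable ℝ g) {L : ℝ}
    (hgL : ∀ y, ‖gradient g y‖ ≤ L) (x y : E) : |g y - g x| ≤ L * ‖y - x‖ := by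
  have hfderiv : ∀ z ∈ Set.univ, ‖fderiv ℝ g z‖ ≤ L := fun z _ => by
    simpa [gradient] using hgL z
  simpa using convex_univ.norm_image_sub_le_of_norm_fderiv_le (fun z _ => hg z) hfderiv
    (Set.mem_univ x) (Set.mem_univ y)

theorem sub_le_norm_add_smul {F : Type*} [SeminormedAddCommGroup F] [NormedSpace ℝ F]
    {u v : F} {a C L : ℝ} (hu : ‖u‖ ≤ L) (hL : 0 ≤ L) (ha : |a| ≤ C + L * ‖v‖) :
    (1 - L ^ 2) * ‖v‖ - L * C ≤ ‖v + a • u‖ :=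
  calc (1 - L ^ 2) * ‖v‖ - L * C ≤ ‖v‖ - |a| * L := by nlinarith
    _ ≤ ‖v‖ - ‖a • u‖ := by
      rw [norm_smul, Real.norm_eq_abs]
      exact sub_le_sub_left (mul_le_mul_of_nonneg_left hu (abs_nonneg a)) _
    _ ≤ ‖v + a • u‖ := by simpa using norm_sub_norm_le v (-(a • u))

theorem norm_gradient_cost_ge {f g : E → ℝ} (hf : Differentiable ℝ f) (hg : Differentiable ℝ g)
    {L : ℝ} (hfL : ∀ x, ‖gradient f x‖ ≤ L) (hgL : ∀ y, ‖gradient g y‖ ≤ L) (x y : E) :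
    2 * ((1 - L ^ 2) * ‖x - y‖ - L * |f x - g x|) ≤
      ‖gradient (fun x' => ‖x' - y‖ ^ 2 + (f x' - g y) ^ 2) x‖ := by
  have hL : 0 ≤ L := (norm_nonneg _).trans (hfL x)
  have hfg : |f x - g y| ≤ |f x - g x| + L * ‖x - y‖ :=
    (abs_sub_le _ (g x) _).trans (by gcongr; exact abs_sub_le_of_norm_gradient_le hg hgL y x)
  rw [((hf x).hasGradientAt.norm_sub_sq_add_sub_sq y (g y)).gradient, norm_smul,
    Real.norm_two]
  gcongr
  exact sub_le_norm_add_smul (hfL x) hL hfg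

end

theorem statement18_general {n : ℕ} (f g : EuclideanSpace ℝ (Fin n) → ℝ)
    (hf : ContDiff ℝ 1 f) (hg : ContDiff ℝ 1 g)
    (L : ℝ) (hL : L < 1)
    (hfL : ∀ x, ‖gradient f x‖ ≤ L) (hgL : ∀ y, ‖gradient g y‖ ≤ L)
    (c : EuclideanSpace ℝ (Fin n) → EuclideanSpace ℝ (Fin n) → ℝ)
    (hc : ∀ x y, c x y = ‖x - y‖ ^ 2 + (f x - g y) ^ 2)
    (x : EuclideanSpace ℝ (Fin n)) :
    ∀ M : ℝ, ∃ R : ℝ, ∀ y : EuclideanSpace ℝ (Fin n), R ≤ ‖y‖ →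
      M ≤ ‖-(gradient (fun x' => c x' y) x)‖ := by
  have hL0 : 0 ≤ L := (norm_nonneg _).trans (hfL x)
  have hslope : 0 < 1 - L ^ 2 := by nlinarith
  intro M
  refine ⟨‖x‖ + (M / 2 + L * |f x - g x|) / (1 - L ^ 2), fun y hy => ?_⟩
  have hcy : (fun x' => c x' y) = fun x' => ‖x' - y‖ ^ 2 + (f x' - g y) ^ 2 := funext (hc · y)
  have hR : M / 2 + L * |f x - g x| ≤ (1 - L ^ 2) * (‖y‖ - ‖x‖) := by
    rw [← div_le_iff₀' hslope]
    linarith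
  rw [hcy, norm_neg]
  calc M ≤ 2 * ((1 - L ^ 2) * (‖y‖ - ‖x‖) - L * |f x - g x|) := by linarith
    _ ≤ 2 * ((1 - L ^ 2) * ‖x - y‖ - L * |f x - g x|) := by
      gcongr
      exact norm_sub_rev x y ▸ norm_sub_norm_le y x
    _ ≤ _ := norm_gradient_cost_ge (hf.differentiable one_ne_zero)
      (hg.differentiable one_ne_zero) hfL hgL x y

/-- For the cost `c(x,y) = ‖x-y‖² + (f(x) - g(y))²` with `f, g` convex `C¹` functions whose
gradients are bounded by `L < 1`, the map `y ↦ -∇ₓ c(x,y)` is proper for every fixed `x`: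
`‖-∇ₓ c(x,y)‖ → ∞` as `‖y‖ → ∞`. -/
theorem statement18 {n : ℕ} (f g : EuclideanSpace ℝ (Fin n) → ℝ)
    (hf : ContDiff ℝ 1 f) (hg : ContDiff ℝ 1 g)
    (hfc : ConvexOn ℝ Set.univ f) (hgc : ConvexOn ℝ Set.univ g)
    (L : ℝ) (hL : L < 1)
    (hfL : ∀ x, ‖gradient f x‖ ≤ L) (hgL : ∀ y, ‖gradient g y‖ ≤ L)
    (c : EuclideanSpace ℝ (Fin n) → EuclideanSpace ℝ (Fin n) → ℝ)
    (hc : ∀ x y, c x y = ‖x - y‖ ^ 2 + (f x - g y) ^ 2)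
    (x : EuclideanSpace ℝ (Fin n)) :
    ∀ M : ℝ, ∃ R : ℝ, ∀ y : EuclideanSpace ℝ (Fin n), R ≤ ‖y‖ →
      M ≤ ‖-(gradient (fun x' => c x' y) x)‖ :=
  statement18_general f g hf hg L hL hfL hgL c hc x
end
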